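/- arXiv:2007.02776 — 2 statements merged into one kernel-verified Lean document; each statement's English description precedes it below -/
import Mathlib

section
/- Let f: ℝⁿ → ℝⁿ be differentiable with Lipschitz derivative on a neighborhood of ξ, f(ξ) = 0, and suppose the matrix M = I − m^{-1} f'(ξ) satisfies ‖M‖ < 1 for a nonzero constant m. Then there exists δ > 0 such that for every x_0 ∈ B(ξ, δ), the parallel chord iteration x_{i+1} = x_i − m^{-1} f(x_i) converges to ξ at least linearly. -/
/-!
The parallel chord map `Φ y = y - m⁻¹ • f y` fixes the root `ξ`, and its strict derivative there
is `I - m⁻¹ f'(ξ)`: the Lipschitz derivative makes `f'` continuous at `ξ`, so `f` is strictly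
differentiable at `ξ`. Since `‖I - m⁻¹ f'(ξ)‖ < C < 1`, the map `Φ` is `C`-Lipschitz on a ball
around `ξ`. This ball is then mapped into itself, and every orbit starting in it satisfies
`‖x_{i+1} - ξ‖ ≤ C ‖x_i - ξ‖`, hence converges to `ξ` geometrically.
-/

open Filter Topology Metric Set Function
open scoped NNReal

section FixedPoint

variable {X : Type*} [PseudoMetricSpace X] {Φ : X → X} {ξ : X} {C : ℝ≥0} {δ : ℝ}

theorem LipschitzOnWith.mapsTo_ball_of_isFixedPt (hΦ : LipschitzOnWith C Φ (ball ξ δ))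
    (hξ : IsFixedPt Φ ξ) (hC : C ≤ 1) : MapsTo Φ (ball ξ δ) (ball ξ δ) := by
  intro y hy
  have hξδ : ξ ∈ ball ξ δ := mem_ball_self (pos_of_mem_ball hy)
  rw [mem_ball]
  calc dist (Φ y) ξ = dist (Φ y) (Φ ξ) := by rw [hξ.eq]
    _ ≤ C * dist y ξ := hΦ.dist_le_mul y hy ξ hξδ
    _ ≤ 1 * dist y ξ := by gcongr; exact_mod_cast hC
    _ < δ := by rw [one_mul]; exact mem_ball.1 hy

theorem LipschitzOnWith.dist_orbit_succ_le_mul (hΦ : LipschitzOnWith C Φ (ball ξ δ))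
    (hξ : IsFixedPt Φ ξ) (hC : C ≤ 1) {x : ℕ → X} (hx0 : x 0 ∈ ball ξ δ)
    (hx : ∀ i, x (i + 1) = Φ (x i)) (i : ℕ) : dist (x (i + 1)) ξ ≤ C * dist (x i) ξ := by
  have hmem : ∀ i, x i ∈ ball ξ δ := by
    intro i
    induction i with
    | zero => exact hx0
    | succ i ih => rw [hx i]; exact hΦ.mapsTo_ball_of_isFixedPt hξ hC ih
  calc dist (x (i + 1)) ξ = dist (Φ (x i)) (Φ ξ) := by rw [hx i, hξ.eq]
    _ ≤ C * dist (x i) ξ := hΦ.dist_le_mul _ (hmem i) ξ (mem_ball_self (pos_of_mem_ball hx0))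

theorem tendsto_of_dist_succ_le_mul {x : ℕ → X} {C : ℝ} (hC0 : 0 ≤ C) (hC : C < 1)
    (h : ∀ i, dist (x (i + 1)) ξ ≤ C * dist (x i) ξ) : Tendsto x atTop (𝓝 ξ) := by
  rw [tendsto_iff_dist_tendsto_zero]
  refine squeeze_zero (fun _ => dist_nonneg)
    (fun i => le_geom (u := fun i => dist (x i) ξ) hC0 i fun k _ => h k) ?_
  simpa using (tendsto_pow_atTop_nhds_zero_of_lt_one hC0 hC).mul_const (dist (x 0) ξ)

end FixedPoint

section ParallelChord

variable {𝕜 E : Type*}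

def parallelChordMap [Field 𝕜] [AddCommGroup E] [Module 𝕜 E] (m : 𝕜) (f : E → E) (y : E) : E :=
  y - m⁻¹ • f y

theorem isFixedPt_parallelChordMap [Field 𝕜] [AddCommGroup E] [Module 𝕜 E] {m : 𝕜}
    {f : E → E} {ξ : E} (hroot : f ξ = 0) : IsFixedPt (parallelChordMap m f) ξ := by
  simp [IsFixedPt, parallelChordMap, hroot]

theorem HasStrictFDerivAt.parallelChordMap [NontriviallyNormedField 𝕜] [NormedAddCommGroup E]
    [NormedSpace 𝕜 E] {f : E → E} {f' : E →L[𝕜] E} {x : E} (hf : HasStrictFDerivAt f f' x)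
    (m : 𝕜) :
    HasStrictFDerivAt (parallelChordMap m f) (ContinuousLinearMap.id 𝕜 E - m⁻¹ • f') x :=
  (hasStrictFDerivAt_id x).sub (hf.const_smul m⁻¹)

end ParallelChord

theorem parallel_chord_local_linear_convergence_general (n : ℕ)
    (f : EuclideanSpace ℝ (Fin n) → EuclideanSpace ℝ (Fin n))
    (ξ : EuclideanSpace ℝ (Fin n))
    (hroot : f ξ = 0)
    (ε : ℝ) (hε : 0 < ε)
    (hdiff : ∀ x ∈ ball ξ ε, DifferentiableAt ℝ f x)
    (K : NNReal) (hLip : LipschitzOnWith K (fderiv ℝ f) (ball ξ ε))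
    (m : ℝ)
    (hM : ‖ContinuousLinearMap.id ℝ (EuclideanSpace ℝ (Fin n)) -
      m⁻¹ • fderiv ℝ f ξ‖ < 1) :
    ∃ δ > 0, ∀ x : ℕ → EuclideanSpace ℝ (Fin n),
      x 0 ∈ ball ξ δ → (∀ i, x (i + 1) = x i - m⁻¹ • f (x i)) →
      Tendsto x atTop (𝓝 ξ) ∧
      ∃ C < (1 : ℝ), ∃ k : ℕ, ∀ i ≥ k, ‖x (i + 1) - ξ‖ ≤ C * ‖x i - ξ‖ := by
  have hnhds : ball ξ ε ∈ 𝓝 ξ := ball_mem_nhds ξ hε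
  have hf : HasStrictFDerivAt f (fderiv ℝ f ξ) ξ :=
    hasStrictFDerivAt_of_hasFDerivAt_of_continuousAt
      (mem_of_superset hnhds fun y hy => (hdiff y hy).hasFDerivAt)
      (hLip.continuousOn.continuousAt hnhds)
  have hM' : ‖ContinuousLinearMap.id ℝ (EuclideanSpace ℝ (Fin n)) - m⁻¹ • fderiv ℝ f ξ‖₊ < 1 :=
    mod_cast hM
  obtain ⟨C, hMC, hC1⟩ := exists_between hM'
  obtain ⟨s, hs, hΦ⟩ := (hf.parallelChordMap m).exists_lipschitzOnWith_of_nnnorm_lt C hMC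
  obtain ⟨δ, hδ, hδs⟩ := Metric.mem_nhds_iff.1 hs
  refine ⟨δ, hδ, fun x hx0 hx => ?_⟩
  have hstep := (hΦ.mono hδs).dist_orbit_succ_le_mul (isFixedPt_parallelChordMap hroot)
    hC1.le hx0 hx
  refine ⟨tendsto_of_dist_succ_le_mul C.coe_nonneg hC1 hstep, C, hC1, 0, fun i _ => ?_⟩
  simpa only [dist_eq_norm] using hstep i

/-- Local linear convergence of the parallel chord method
x_{i+1} = x_i − m⁻¹ f(x_i), provided f is differentiable with Lipschitz
derivative near the root ξ and ‖I − m⁻¹ f'(ξ)‖ < 1. -/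
theorem parallel_chord_local_linear_convergence (n : ℕ)
    (f : EuclideanSpace ℝ (Fin n) → EuclideanSpace ℝ (Fin n))
    (ξ : EuclideanSpace ℝ (Fin n))
    (hroot : f ξ = 0)
    (ε : ℝ) (hε : 0 < ε)
    (hdiff : ∀ x ∈ ball ξ ε, DifferentiableAt ℝ f x)
    (K : NNReal) (hLip : LipschitzOnWith K (fderiv ℝ f) (ball ξ ε))
    (m : ℝ) (hm : m ≠ 0)
    (hM : ‖ContinuousLinearMap.id ℝ (EuclideanSpace ℝ (Fin n)) -
      m⁻¹ • fderiv ℝ f ξ‖ < 1) :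
    ∃ δ > 0, ∀ x : ℕ → EuclideanSpace ℝ (Fin n),
      x 0 ∈ ball ξ δ → (∀ i, x (i + 1) = x i - m⁻¹ • f (x i)) →
      Tendsto x atTop (𝓝 ξ) ∧
      ∃ C < (1 : ℝ), ∃ k : ℕ, ∀ i ≥ k, ‖x (i + 1) - ξ‖ ≤ C * ‖x i - ξ‖ :=
  parallel_chord_local_linear_convergence_general n f ξ hroot ε hε hdiff K hLip m hM
end

section
/- Let Φ: ℝⁿ → ℝⁿ be differentiable at a point ξ with Φ(ξ) = ξ, suppose the iteration x_{i+1} = Φ(x_i) produces a sequence with x_i → ξ and x_i ≠ ξ for all i, and suppose Φ'(ξ) ≠ 0 with the additional property that liminf_{i→∞} ‖Φ'(ξ)(x_i − ξ)‖/‖x_i − ξ‖ = c > 0. Then the convergence cannot be of order p for any p > 1: for every C ≥ 0 and p > 1, the inequality ‖x_{i+1} − ξ‖ ≤ C‖x_i − ξ‖^p fails for infinitely many i. -/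
/-!
The error `eᵢ = xᵢ - ξ` satisfies `eᵢ₊₁ = Φ'(ξ) eᵢ + o(eᵢ)`. A positive liminf of
`‖Φ'(ξ) eᵢ‖ / ‖eᵢ‖` therefore forbids `eᵢ₊₁ = o(eᵢ)`, whereas a bound
`‖eᵢ₊₁‖ ≤ C ‖eᵢ‖ ^ p` holding eventually with `p > 1` would give
`eᵢ₊₁ = O(‖eᵢ‖ ^ p) = o(eᵢ)` because `eᵢ → 0`.
-/

open Filter Topology Asymptotics

section

variable {α E F : Type*} [NormedAddCommGroup E] [NormedAddCommGroup F] {l : Filter α}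

theorem isLittleO_norm_rpow_of_tendsto_zero {v : α → E} (hv : Tendsto v l (𝓝 0)) {p : ℝ}
    (hp : 1 < p) : (fun i => ‖v i‖ ^ p) =o[l] v := by
  have hpow : Tendsto (fun i => ‖v i‖ ^ (p - 1)) l (𝓝 0) := by
    simpa [Real.zero_rpow (sub_pos.2 hp).ne'] using
      hv.norm.rpow_const (p := p - 1) (Or.inr (sub_pos.2 hp).le)
  have hsplit : (fun i => ‖v i‖ ^ p) = fun i => ‖v i‖ ^ (p - 1) * ‖v i‖ := by
    funext i
    conv_lhs => rw [← sub_add_cancel p 1, Real.rpow_add' (norm_nonneg _) (by linarith),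
      Real.rpow_one]
  rw [hsplit, ← isLittleO_norm_right]
  simpa using ((isLittleO_one_iff ℝ).2 hpow).mul_isBigO (isBigO_refl (fun i => ‖v i‖) l)

theorem isLittleO_of_norm_le_mul_rpow {u : α → F} {v : α → E} (hv : Tendsto v l (𝓝 0))
    {C p : ℝ} (hp : 1 < p) (hbound : ∀ᶠ i in l, ‖u i‖ ≤ C * ‖v i‖ ^ p) : u =o[l] v :=
  (IsBigO.of_bound C (by simpa [abs_of_nonneg (Real.rpow_nonneg (norm_nonneg _) _)] using
    hbound)).trans_isLittleO (isLittleO_norm_rpow_of_tendsto_zero hv hp)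

end

theorem HasFDerivAt.not_isLittleO_sub_of_liminf_ne_zero {α 𝕜 E F : Type*}
    [NontriviallyNormedField 𝕜] [NormedAddCommGroup E] [NormedSpace 𝕜 E]
    [NormedAddCommGroup F] [NormedSpace 𝕜 F] {l : Filter α} [l.NeBot] {Φ : E → F}
    {f : E →L[𝕜] F} {ξ : E} (hΦ : HasFDerivAt Φ f ξ) {u : α → E} (hu : Tendsto u l (𝓝 ξ))
    (hliminf : liminf (fun i => ‖f (u i - ξ)‖ / ‖u i - ξ‖) l ≠ 0) :
    ¬ (fun i => Φ (u i) - Φ ξ) =o[l] fun i => u i - ξ := by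
  intro hsmall
  have hlin : (fun i => f (u i - ξ)) =o[l] fun i => u i - ξ := by
    simpa using hsmall.sub (hΦ.isLittleO.comp_tendsto hu)
  have hratio : Tendsto (fun i => ‖f (u i - ξ)‖ / ‖u i - ξ‖) l (𝓝 0) :=
    (isLittleO_iff_tendsto' (.of_forall fun i h => by simp [norm_eq_zero.1 h])).1
      hlin.norm_norm
  exact hliminf hratio.liminf_eq

theorem no_superlinear_convergence_of_nonzero_derivative_general (n : ℕ)
    (Φ : EuclideanSpace ℝ (Fin n) → EuclideanSpace ℝ (Fin n))
    (ξ : EuclideanSpace ℝ (Fin n))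
    (hfix : Φ ξ = ξ)
    (hdiff : DifferentiableAt ℝ Φ ξ)
    (x : ℕ → EuclideanSpace ℝ (Fin n))
    (hrec : ∀ i, x (i + 1) = Φ (x i))
    (hlim : Tendsto x atTop (𝓝 ξ))
    (c : ℝ) (hc : 0 < c)
    (hliminf : Filter.liminf
      (fun i => ‖(fderiv ℝ Φ ξ) (x i - ξ)‖ / ‖x i - ξ‖) atTop = c) :
    ∀ C ≥ (0 : ℝ), ∀ p > (1 : ℝ),
      ∃ᶠ i in atTop, ¬ (‖x (i + 1) - ξ‖ ≤ C * ‖x i - ξ‖ ^ p) := by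
  intro C _ p hp
  refine not_eventually.1 fun hbound => ?_
  have hsuper := isLittleO_of_norm_le_mul_rpow (tendsto_sub_nhds_zero_iff.2 hlim) hp hbound
  refine hdiff.hasFDerivAt.not_isLittleO_sub_of_liminf_ne_zero hlim (hliminf ▸ hc.ne') ?_
  simpa only [hrec, hfix] using hsuper

/-- If Φ'(ξ) ≠ 0 and the error directions are not asymptotically annihilated
by Φ'(ξ) (positive liminf of ‖Φ'(ξ)(x_i − ξ)‖/‖x_i − ξ‖), then the fixed-point
iteration cannot converge with order p for any p > 1. -/
theorem no_superlinear_convergence_of_nonzero_derivative (n : ℕ)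
    (Φ : EuclideanSpace ℝ (Fin n) → EuclideanSpace ℝ (Fin n))
    (ξ : EuclideanSpace ℝ (Fin n))
    (hfix : Φ ξ = ξ)
    (hdiff : DifferentiableAt ℝ Φ ξ)
    (x : ℕ → EuclideanSpace ℝ (Fin n))
    (hrec : ∀ i, x (i + 1) = Φ (x i))
    (hlim : Tendsto x atTop (𝓝 ξ))
    (hne : ∀ i, x i ≠ ξ)
    (hder : fderiv ℝ Φ ξ ≠ 0)
    (c : ℝ) (hc : 0 < c)
    (hliminf : Filter.liminf
      (fun i => ‖(fderiv ℝ Φ ξ) (x i - ξ)‖ / ‖x i - ξ‖) atTop = c) :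
    ∀ C ≥ (0 : ℝ), ∀ p > (1 : ℝ),
      ∃ᶠ i in atTop, ¬ (‖x (i + 1) - ξ‖ ≤ C * ‖x i - ξ‖ ^ p) :=
  no_superlinear_convergence_of_nonzero_derivative_general n Φ ξ hfix hdiff x hrec hlim c hc hliminf
end
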